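/- arXiv:2010.08795 — 5 statements merged into one kernel-verified Lean document; each statement's English description precedes it below -/
import Mathlib

section
/- Let n be a positive integer and let R be a nonempty subset of ℤ/nℤ. Let F = {A + R : A ⊆ ℤ/nℤ} be the family of all sumsets A + R, i.e. all unions of cyclic translates of R. Then the average size of a set in F is at least n/2; that is, ∑_{S ∈ F} |S| ≥ (n/2)·|F|. -/
open Finset Pointwise

/-- The union-closed family generated by the cyclic translates of a fixed
nonempty set `R ⊆ ℤ/nℤ`, i.e. `F = {A + R : A ⊆ ℤ/nℤ}`, has average set size
at least `n/2`:  `∑_{S ∈ F} |S| ≥ (n/2)·|F|`. -/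
theorem stmt_0 (n : ℕ) [NeZero n] (R : Finset (ZMod n)) (hR : R.Nonempty)
    (F : Finset (Finset (ZMod n)))
    (hF : F = (univ : Finset (Finset (ZMod n))).image (fun A => A + R)) :
    2 * ∑ S ∈ F, S.card ≥ n * F.card := by
  set σ : Finset (ZMod n) → Finset (ZMod n) := fun S => -Sᶜ + R with hσ
  have mem_σ : ∀ (S : Finset (ZMod n)) (x : ZMod n), x ∈ σ S ↔ ∃ r ∈ R, r - x ∉ S := by
    intro S x
    simp only [hσ, Finset.mem_add, Finset.mem_neg, Finset.mem_compl]
    constructor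
    · rintro ⟨a, ⟨c, hc, rfl⟩, r, hr, rfl⟩
      exact ⟨r, hr, by simpa using hc⟩
    · rintro ⟨r, hr, h⟩
      exact ⟨-(r - x), ⟨r - x, h, rfl⟩, r, hr, by ring⟩
  have σ_mem : ∀ S, σ S ∈ F := by
    intro S
    rw [hF]
    exact Finset.mem_image.2 ⟨-Sᶜ, Finset.mem_univ _, rfl⟩
  have σσ : ∀ S ∈ F, σ (σ S) = S := by
    intro S hS
    rw [hF, Finset.mem_image] at hS
    obtain ⟨A, -, rfl⟩ := hS
    ext y
    rw [mem_σ]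
    constructor
    · rintro ⟨r, hr, h⟩
      by_contra hy
      exact h ((mem_σ _ _).2 ⟨r, hr, by simpa using hy⟩)
    · intro hy
      obtain ⟨a, ha, r0, hr0, rfl⟩ := Finset.mem_add.1 hy
      refine ⟨r0, hr0, fun h => ?_⟩
      obtain ⟨r', hr', h'⟩ := (mem_σ _ _).1 h
      exact h' (Finset.mem_add.2 ⟨a, ha, r', hr', by ring⟩)
  have hcard : ∀ S : Finset (ZMod n), n ≤ S.card + (σ S).card := by
    intro S
    have h1 : Sᶜ.card ≤ (σ S).card := by
      calc Sᶜ.card = (-Sᶜ).card := (Finset.card_neg _).symm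
        _ ≤ (-Sᶜ + R).card := Finset.card_le_card_add_right hR
    have h2 : S.card + Sᶜ.card = n := by
      rw [Finset.card_add_card_compl, ZMod.card]
    omega
  have hsum : ∑ S ∈ F, (σ S).card = ∑ S ∈ F, S.card := by
    refine Finset.sum_nbij' σ σ ?_ ?_ ?_ ?_ ?_
    · intro S hS; exact σ_mem S
    · intro S hS; exact σ_mem S
    · intro S hS; exact σσ S hS
    · intro S hS; exact σσ S hS
    · intro S hS; rfl
  calc n * F.card = ∑ S ∈ F, n := by rw [Finset.sum_const, smul_eq_mul, mul_comm]
    _ ≤ ∑ S ∈ F, (S.card + (σ S).card) := Finset.sum_le_sum fun S _ => hcard S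
    _ = ∑ S ∈ F, S.card + ∑ S ∈ F, (σ S).card := Finset.sum_add_distrib
    _ = 2 * ∑ S ∈ F, S.card := by rw [hsum]; ring
end

section
/- Let n be a positive integer and let R be a nonempty subset of ℤ/nℤ. Let F = {A + R : A ⊆ ℤ/nℤ}. Then there exists an element x ∈ ℤ/nℤ such that x is contained in at least half of the sets in F, i.e. 2·|{S ∈ F : x ∈ S}| ≥ |F|. In other words, the Union-Closed Conjecture holds for F. -/
open Finset Pointwise

/-!
For `S = A + R` the map `θ S = -Sᶜ + R` is injective: `x ∉ S` exactly when `r - x ∈ θ S` for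
all `r ∈ R`. Since `θ` maps the family `F` into itself and `#Sᶜ = #(-Sᶜ) ≤ #θ S` for `R ≠ ∅`,
summing over `F` gives `∑ #Sᶜ ≤ ∑ #S`, so the sets of `F` have average size at least `|G| / 2`,
and double counting produces an element lying in at least half of them.
-/

section DoubleCounting

variable {α : Type*} [Fintype α] [DecidableEq α]

theorem sum_card_filter_mem_eq_sum_card (F : Finset (Finset α)) :
    ∑ x, #{S ∈ F | x ∈ S} = ∑ S ∈ F, #S := by
  simp_rw [card_filter]
  rw [sum_comm]
  simp

theorem exists_two_mul_card_filter_mem_ge [Nonempty α] {F : Finset (Finset α)}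
    (h : ∑ S ∈ F, #Sᶜ ≤ ∑ S ∈ F, #S) : ∃ x, 2 * #{S ∈ F | x ∈ S} ≥ #F := by
  suffices ∑ _x : α, #F ≤ ∑ x, 2 * #{S ∈ F | x ∈ S} by
    obtain ⟨x, -, hx⟩ := exists_le_of_sum_le univ_nonempty this
    exact ⟨x, hx⟩
  calc ∑ _x : α, #F = ∑ S ∈ F, (#S + #Sᶜ) := by
        simp only [card_add_card_compl, sum_const, card_univ, smul_eq_mul, mul_comm]
    _ ≤ 2 * ∑ S ∈ F, #S := by rw [sum_add_distrib]; omega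
    _ = ∑ x, 2 * #{S ∈ F | x ∈ S} := by rw [← mul_sum, sum_card_filter_mem_eq_sum_card]

end DoubleCounting

section Sumsets

variable {G : Type*} [AddCommGroup G] [Fintype G] [DecidableEq G]

theorem notMem_add_iff_forall_sub_mem (A R : Finset G) (x : G) :
    x ∉ A + R ↔ ∀ r ∈ R, r - x ∈ -(A + R)ᶜ + R := by
  constructor
  · intro hx r hr
    rw [sub_eq_neg_add]
    exact add_mem_add (neg_mem_neg (mem_compl.2 hx)) hr
  · intro h hx
    obtain ⟨a, ha, r, hr, rfl⟩ := mem_add.1 hx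
    obtain ⟨y, hy, r', hr', hyr⟩ := mem_add.1 (h r hr)
    obtain ⟨z, hz, rfl⟩ := mem_neg.1 hy
    have hz_eq : z = a + r' := by
      rw [← sub_eq_zero, ← neg_eq_zero, ← sub_eq_zero.2 hyr]; abel
    exact mem_compl.1 hz (hz_eq ▸ add_mem_add ha hr')

theorem injOn_neg_compl_add (R : Finset G) :
    Set.InjOn (fun S => -Sᶜ + R) (Set.range (· + R)) := by
  rintro _ ⟨A, rfl⟩ _ ⟨B, rfl⟩ h
  ext x
  rw [← not_iff_not, notMem_add_iff_forall_sub_mem, notMem_add_iff_forall_sub_mem]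
  simp only at h
  rw [h]

theorem sum_card_compl_le_sum_card_image_add {R : Finset G} (hR : R.Nonempty) :
    ∑ S ∈ univ.image (· + R), #Sᶜ ≤ ∑ S ∈ univ.image (· + R), #S := by
  set F := univ.image (· + R)
  have hθF : F.image (fun S => -Sᶜ + R) ⊆ F := by
    intro T hT
    obtain ⟨S, -, rfl⟩ := mem_image.1 hT
    exact mem_image_of_mem _ (mem_univ _)
  have hθinj : Set.InjOn (fun S => -Sᶜ + R) F :=
    (injOn_neg_compl_add R).mono fun S hS => by simpa [F] using hS
  calc ∑ S ∈ F, #Sᶜ ≤ ∑ S ∈ F, #(-Sᶜ + R) :=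
        sum_le_sum fun S _ => (card_neg _).symm.trans_le (card_le_card_add_right hR)
    _ = ∑ T ∈ F.image (fun S => -Sᶜ + R), #T := (sum_image hθinj).symm
    _ ≤ ∑ T ∈ F, #T := sum_le_sum_of_subset hθF

end Sumsets

/-- The Union-Closed Conjecture holds for the family `F = {A + R : A ⊆ ℤ/nℤ}`
of all unions of cyclic translates of a fixed nonempty `R ⊆ ℤ/nℤ`: there is an
element `x` contained in at least half of the sets of `F`. -/
theorem stmt_1 (n : ℕ) [NeZero n] (R : Finset (ZMod n)) (hR : R.Nonempty)
    (F : Finset (Finset (ZMod n)))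
    (hF : F = (univ : Finset (Finset (ZMod n))).image (fun A => A + R)) :
    ∃ x : ZMod n, 2 * (F.filter (fun S => x ∈ S)).card ≥ F.card := by
  subst hF
  exact exists_two_mul_card_filter_mem_ge (sum_card_compl_le_sum_card_image_add hR)
end

section
/- Let (G, +) be a finite abelian group and let R be a nonempty subset of G. Let F = {A + R : A ⊆ G} be the family of all sumsets A + R, i.e. all unions of translates of R. Then the average size of a set in F is at least |G|/2; that is, ∑_{S ∈ F} |S| ≥ (|G|/2)·|F|. -/
open Finset Pointwise

lemma recover_aux {G : Type*} [AddCommGroup G] [Fintype G] [DecidableEq G]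
    (R A : Finset G) :
    (((A + R)ᶜ + (-R))ᶜ) + R = A + R := by
  apply Finset.Subset.antisymm
  · intro x hx
    rw [Finset.mem_add] at hx
    obtain ⟨y, hy, r, hr, rfl⟩ := hx
    rw [Finset.mem_compl] at hy
    by_contra hxr
    exact hy (Finset.mem_add.2 ⟨y + r, Finset.mem_compl.2 hxr, -r,
      Finset.neg_mem_neg hr, by abel⟩)
  · intro x hx
    rw [Finset.mem_add] at hx
    obtain ⟨a, ha, r, hr, rfl⟩ := hx
    refine Finset.mem_add.2 ⟨a, ?_, r, hr, rfl⟩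
    rw [Finset.mem_compl, Finset.mem_add]
    rintro ⟨c, hc, s, hs, hcs⟩
    rw [Finset.mem_neg] at hs
    obtain ⟨t, ht, rfl⟩ := hs
    rw [Finset.mem_compl] at hc
    exact hc (Finset.mem_add.2 ⟨a, ha, t, ht, by rw [← hcs]; abel⟩)

/-- For a finite abelian group `G` and a nonempty `R ⊆ G`, the family
`F = {A + R : A ⊆ G}` of all unions of translates of `R` has average set size
at least `|G|/2`:  `∑_{S ∈ F} |S| ≥ (|G|/2)·|F|`. -/
theorem stmt_2 (G : Type*) [AddCommGroup G] [Fintype G] [DecidableEq G]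
    (R : Finset G) (hR : R.Nonempty)
    (F : Finset (Finset G))
    (hF : F = (univ : Finset (Finset G)).image (fun A => A + R)) :
    2 * ∑ S ∈ F, S.card ≥ Fintype.card G * F.card := by
  set g : Finset G → Finset G := fun S => (-S)ᶜ + R with hg
  -- g maps F into F
  have hmem : ∀ S ∈ F, g S ∈ F := by
    intro S _
    rw [hF]
    exact Finset.mem_image.2 ⟨(-S)ᶜ, Finset.mem_univ _, rfl⟩
  -- g is an involution on F
  have hinv : ∀ S ∈ F, g (g S) = S := by
    intro S hS
    rw [hF] at hS
    obtain ⟨A, -, rfl⟩ := Finset.mem_image.1 hS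
    have hc : ∀ X : Finset G, -(Xᶜ) = (-X)ᶜ := by
      intro X; ext x; simp [Finset.mem_neg]
    have hneg : -((-(A + R))ᶜ + R) = (A + R)ᶜ + (-R) := by
      rw [neg_add_rev, add_comm, hc, neg_neg]
    show (-((-(A + R))ᶜ + R))ᶜ + R = A + R
    rw [hneg, recover_aux]
  -- card bound
  have hcard : ∀ S : Finset G, Fintype.card G ≤ S.card + (g S).card := by
    intro S
    obtain ⟨r, hr⟩ := hR
    have h1 : (-S)ᶜ.card ≤ (g S).card := by
      apply Finset.card_le_card_of_injOn (fun x => x + r)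
      · intro x hx
        exact Finset.mem_add.2 ⟨x, hx, r, hr, rfl⟩
      · intro a _ b _ h
        exact add_right_cancel h
    have h2 : (-S)ᶜ.card = Fintype.card G - S.card := by
      rw [Finset.card_compl, Finset.card_neg]
    have h3 : S.card ≤ Fintype.card G := Finset.card_le_univ S
    omega
  -- sum over F of (g S).card equals sum of S.card
  have hsum : ∑ S ∈ F, (g S).card = ∑ S ∈ F, S.card := by
    exact Finset.sum_nbij' g g hmem hmem hinv hinv (fun S hS => rfl)
  calc Fintype.card G * F.card = ∑ _S ∈ F, Fintype.card G := by
        rw [Finset.sum_const, smul_eq_mul, mul_comm]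
    _ ≤ ∑ S ∈ F, (S.card + (g S).card) := Finset.sum_le_sum (fun S _ => hcard S)
    _ = ∑ S ∈ F, S.card + ∑ S ∈ F, (g S).card := Finset.sum_add_distrib
    _ = 2 * ∑ S ∈ F, S.card := by rw [hsum]; ring
end

section
/- Let (G, +) be a finite abelian group and let R be a nonempty subset of G. Let F = {A + R : A ⊆ G}. Then there exists an element x ∈ G such that x is contained in at least half of the sets in F, i.e. 2·|{S ∈ F : x ∈ S}| ≥ |F|. In other words, the Union-Closed Conjecture holds for F. -/
open Finset Pointwise

section Aux

variable {G : Type*} [AddCommGroup G] [Fintype G] [DecidableEq G]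

/-- Membership in `τ S = -(Sᶜ) + R`. -/
lemma mem_tau_aux (R S : Finset G) (x : G) :
    x ∈ -(Sᶜ) + R ↔ ∃ r ∈ R, r - x ∉ S := by
  simp only [Finset.mem_add, Finset.mem_neg, Finset.mem_compl]
  constructor
  · rintro ⟨y, ⟨z, hz, rfl⟩, r, hr, rfl⟩
    exact ⟨r, hr, by simpa using hz⟩
  · rintro ⟨r, hr, h⟩
    exact ⟨-(r - x), ⟨r - x, h, rfl⟩, r, hr, by abel⟩

/-- `τ` is an involution on sumsets: `τ (τ (A + R)) = A + R`. -/
lemma tau_tau_aux (R A : Finset G) :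
    -((-( (A + R)ᶜ ) + R)ᶜ) + R = A + R := by
  ext x
  rw [mem_tau_aux]
  constructor
  · rintro ⟨r, hr, h⟩
    rw [mem_tau_aux] at h
    push_neg at h
    have := h r hr
    simpa using this
  · intro hx
    rw [Finset.mem_add] at hx
    obtain ⟨a, ha, s, hs, rfl⟩ := hx
    refine ⟨s, hs, ?_⟩
    rw [mem_tau_aux]
    push_neg
    intro r hr
    have : r - (s - (a + s)) = a + r := by abel
    rw [this]
    exact Finset.add_mem_add ha hr

end Aux

/-- The Union-Closed Conjecture holds for the family `F = {A + R : A ⊆ G}`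
of all unions of translates of a fixed nonempty subset `R` of a finite abelian
group `G`: some element `x ∈ G` lies in at least half of the sets of `F`. -/
theorem stmt_3 (G : Type*) [AddCommGroup G] [Fintype G] [DecidableEq G]
    (R : Finset G) (hR : R.Nonempty)
    (F : Finset (Finset G))
    (hF : F = (univ : Finset (Finset G)).image (fun A => A + R)) :
    ∃ x : G, 2 * (F.filter (fun S => x ∈ S)).card ≥ F.card := by
  set τ : Finset G → Finset G := fun S => -(Sᶜ) + R with hτ
  -- every element of F is a sumset
  have hmem : ∀ S ∈ F, ∃ A : Finset G, S = A + R := by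
    intro S hS
    rw [hF, Finset.mem_image] at hS
    obtain ⟨A, _, rfl⟩ := hS
    exact ⟨A, rfl⟩
  have hτF : ∀ S ∈ F, τ S ∈ F := by
    intro S _
    rw [hF, Finset.mem_image]
    exact ⟨-(Sᶜ), Finset.mem_univ _, rfl⟩
  have hττ : ∀ S ∈ F, τ (τ S) = S := by
    intro S hS
    obtain ⟨A, rfl⟩ := hmem S hS
    exact tau_tau_aux R A
  -- sum of |τ S| over F equals sum of |S| over F
  have hsumτ : ∑ S ∈ F, (τ S).card = ∑ S ∈ F, S.card := by
    refine Finset.sum_nbij' τ τ hτF hτF hττ hττ ?_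
    intro S hS
    rfl
  -- |S| + |τ S| ≥ |G|
  have hcard : ∀ S : Finset G, Fintype.card G ≤ S.card + (τ S).card := by
    intro S
    have h1 : (Sᶜ).card ≤ (τ S).card := by
      calc (Sᶜ).card = (-(Sᶜ)).card := (Finset.card_neg _).symm
        _ ≤ (-(Sᶜ) + R).card := Finset.card_le_card_add_right hR
    have h2 : S.card + Sᶜ.card = Fintype.card G := by
      rw [Finset.card_add_card_compl]
    omega
  have hsum : Fintype.card G * F.card ≤ 2 * ∑ S ∈ F, S.card := by
    calc Fintype.card G * F.card = ∑ _S ∈ F, Fintype.card G := by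
          rw [Finset.sum_const, smul_eq_mul, mul_comm]
      _ ≤ ∑ S ∈ F, (S.card + (τ S).card) := Finset.sum_le_sum fun S _ => hcard S
      _ = ∑ S ∈ F, S.card + ∑ S ∈ F, (τ S).card := Finset.sum_add_distrib
      _ = 2 * ∑ S ∈ F, S.card := by rw [hsumτ]; ring
  -- double counting
  have hdouble : ∑ x : G, (F.filter (fun S => x ∈ S)).card = ∑ S ∈ F, S.card := by
    simp only [Finset.card_filter]
    rw [Finset.sum_comm]
    congr 1
    ext S
    simp [Finset.card_filter]
  -- pigeonhole
  by_contra hcon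
  push_neg at hcon
  have hFne : F.Nonempty := by
    rw [hF]
    exact (Finset.univ_nonempty).image _
  have hlt : ∀ x : G, 2 * (F.filter (fun S => x ∈ S)).card + 1 ≤ F.card := fun x => hcon x
  have : ∑ x : G, (2 * (F.filter (fun S => x ∈ S)).card + 1) ≤ ∑ _x : G, F.card :=
    Finset.sum_le_sum fun x _ => hlt x
  rw [Finset.sum_add_distrib, ← Finset.mul_sum, Finset.sum_const, Finset.sum_const] at this
  simp only [smul_eq_mul, mul_one, Finset.card_univ] at this
  have hG : 0 < Fintype.card G := Fintype.card_pos
  rw [hdouble] at this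
  nlinarith [hsum]
end

section
/- Let (G, +) be a finite abelian group, let R ⊆ G, and let F = {A + R : A ⊆ G}. Define f : P(G) → P(G) by f(S) = −(G \ Int_R(S)). Then the restriction of f to F is a bijection from F to itself. -/
open Finset Pointwise

/-- For a finite abelian group `G`, `R ⊆ G`, `F = {A + R : A ⊆ G}` and
`f(S) = −(G \ Int_R(S))`, the restriction of `f` to `F` is a bijection from
`F` to itself. -/
theorem stmt_8 (G : Type*) [AddCommGroup G] [Fintype G] [DecidableEq G]
    (R : Finset G)
    (F : Finset (Finset G))
    (hF : F = (univ : Finset (Finset G)).image (fun A => A + R))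
    (f : Finset G → Finset G)
    (hf : ∀ S : Finset G,
      f S = -((univ : Finset G) \ ((univ : Finset G).filter (fun x => {x} + R ⊆ S)))) :
    Set.BijOn f ↑F ↑F := by
  have hmem : ∀ (S : Finset G) (x : G), x ∈ f S ↔ ∃ r ∈ R, -x + r ∉ S := by
    intro S x
    rw [hf]
    simp only [Finset.mem_neg, Finset.mem_sdiff, Finset.mem_filter, Finset.mem_univ,
      true_and, Finset.subset_iff, Finset.mem_add, Finset.mem_singleton]
    push_neg
    constructor
    · rintro ⟨b, hb, rfl⟩
      obtain ⟨y, ⟨a, rfl, r, hr, rfl⟩, hy⟩ := hb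
      exact ⟨r, hr, by simpa using hy⟩
    · rintro ⟨r, hr, hry⟩
      exact ⟨-x, ⟨-x + r, ⟨-x, rfl, r, hr, rfl⟩, hry⟩, by simp⟩
  have hmaps : ∀ S : Finset G, f S ∈ F := by
    intro S
    rw [hF, Finset.mem_image]
    refine ⟨-(univ \ S), mem_univ _, ?_⟩
    ext x
    rw [Finset.mem_add]
    simp only [Finset.mem_neg, Finset.mem_sdiff, Finset.mem_univ, true_and, hmem]
    constructor
    · rintro ⟨y, ⟨c, hc, rfl⟩, r, hr, rfl⟩
      exact ⟨r, hr, by simpa using hc⟩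
    · rintro ⟨r, hr, hc⟩
      exact ⟨-(-x + r), ⟨-x + r, hc, rfl⟩, r, hr, by abel⟩
  have hinv : ∀ S ∈ F, f (f S) = S := by
    intro S hS
    rw [hF, Finset.mem_image] at hS
    obtain ⟨A, -, rfl⟩ := hS
    ext x
    rw [hmem]
    simp only [hmem, not_exists, not_and, not_not, Finset.mem_add]
    constructor
    · rintro ⟨r, hr, h⟩
      have := h r hr
      simpa using this
    · rintro ⟨a, ha, r, hr, rfl⟩
      refine ⟨r, hr, fun r' hr' => ?_⟩
      exact fun h => h a ha r' hr' (by abel)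
  have hmapsTo : Set.MapsTo f ↑F ↑F := fun S _ => by
    simpa using hmaps S
  exact Set.InvOn.bijOn ⟨fun S hS => hinv S (by simpa using hS),
    fun S hS => hinv S (by simpa using hS)⟩ hmapsTo hmapsTo
end
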